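/- Let ω = exp(2π√−1/3). There exists a homogeneous polynomial P of degree 36 in four variables with complex coefficients such that for all complex numbers β0, β1, β2, β3, the value P(β0^3, β1^3, β2^3, β3^3) equals the product over all i1, i2, i3 ∈ {0, 1, 2} of (β0^4 + ω^{i1}·β1^4 + ω^{i2}·β2^4 + ω^{i3}·β3^4). -/

import Mathlib

/-!
The right-hand side is `Q(β₀⁴, β₁⁴, β₂⁴, β₃⁴)`, where `Q = omegaProduct` is the product of the 27 forms
`x₀ + ω^i₁ x₁ + ω^i₂ x₂ + ω^i₃ x₃`. Scaling one of `x₁, x₂, x₃` by `ω` permutes these forms, so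
every monomial of `Q` has exponents divisible by 3 in `x₁, x₂, x₃`, and then also in `x₀`, since `Q`
is homogeneous of degree 27. Hence `Q = R(x₀³, …, x₃³)` with `R` homogeneous of degree 9, and
`P(y) = R(y₀⁴, …, y₃⁴)` works because `(β³)⁴ = (β⁴)³`.
-/

noncomputable def ω : ℂ := Complex.exp (2 * Real.pi * Complex.I / 3)

open MvPolynomial

theorem isPrimitiveRoot_ω : IsPrimitiveRoot ω 3 := by
  simpa [ω] using Complex.isPrimitiveRoot_exp 3 (by norm_num)

theorem Fin.prod_pow_add_one_of_pow_eq_one {M R : Type*} [CommMonoid M] [Monoid R] {ζ : R}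
    {n : ℕ} [NeZero n] (hζ : ζ ^ n = 1) (g : R → M) :
    ∏ i : Fin n, g (ζ ^ ((i : ℕ) + 1)) = ∏ i : Fin n, g (ζ ^ (i : ℕ)) :=
  Fintype.prod_equiv (Equiv.addRight 1) _ _ fun i => by
    rw [Equiv.coe_addRight, Fin.val_add, Fin.val_one', ← pow_eq_pow_mod _ hζ, pow_add, pow_add,
      ← pow_eq_pow_mod _ hζ]

section Scaling

variable {σ : Type*} [DecidableEq σ]

theorem aeval_update_C_mul_X_monomial {R : Type*} [CommSemiring R] (j : σ) (ζ : R)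
    (e : σ →₀ ℕ) (a : R) :
    aeval (Function.update X j (C ζ * X j)) (monomial e a) = monomial e (ζ ^ e j * a) := by
  have hfactor (k : σ) (m : ℕ) : Function.update X j (C ζ * X j) k ^ m =
      C (if k = j then ζ ^ m else 1) * X k ^ m := by
    by_cases h : k = j
    · subst h; simp [mul_pow]
    · simp [h]
  have hpow : (e.prod fun k m => if k = j then ζ ^ m else 1) = ζ ^ e j := by
    rw [Finsupp.prod_ite_eq']
    split_ifs with h
    · rfl
    · rw [Finsupp.notMem_support_iff.mp h, pow_zero]
  rw [aeval_monomial, monomial_eq, algebraMap_eq]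
  simp only [hfactor, Finsupp.prod_mul, ← map_finsuppProd, hpow, C_mul]
  ring

theorem coeff_aeval_update_C_mul_X {R : Type*} [CommSemiring R] (j : σ) (ζ : R)
    (Q : MvPolynomial σ R) (d : σ →₀ ℕ) :
    coeff d (aeval (Function.update X j (C ζ * X j)) Q) = ζ ^ d j * coeff d Q := by
  induction Q using MvPolynomial.induction_on' with
  | monomial e a =>
    rw [aeval_update_C_mul_X_monomial, coeff_monomial, coeff_monomial]
    split_ifs with h
    · rw [h]
    · rw [mul_zero]
  | add p q hp hq => rw [map_add, coeff_add, hp, hq, coeff_add, mul_add]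

theorem dvd_of_mem_support_of_aeval_update_eq_self {R : Type*} [CommRing R] [IsDomain R]
    {ζ : R} {n : ℕ} (hζ : IsPrimitiveRoot ζ n) {Q : MvPolynomial σ R} {j : σ}
    (hQ : aeval (Function.update X j (C ζ * X j)) Q = Q) {d : σ →₀ ℕ} (hd : d ∈ Q.support) :
    n ∣ d j := by
  have hcoeff : ζ ^ d j * coeff d Q = 1 * coeff d Q := by
    rw [← coeff_aeval_update_C_mul_X, hQ, one_mul]
  exact (hζ.pow_eq_one_iff_dvd _).mp (mul_right_cancel₀ (mem_support_iff.mp hd) hcoeff)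

end Scaling

section Expand

variable {σ R : Type*} [CommSemiring R]

theorem exists_expand_eq_of_dvd {n : ℕ} {Q : MvPolynomial σ R}
    (hQ : ∀ d ∈ Q.support, ∀ k, n ∣ d k) : ∃ P : MvPolynomial σ R, expand n P = Q := by
  refine ⟨∑ d ∈ Q.support, monomial (Finsupp.mapRange (· / n) (Nat.zero_div n) d) (coeff d Q), ?_⟩
  rw [map_sum]
  conv_rhs => rw [Q.as_sum]
  refine Finset.sum_congr rfl fun d hd => ?_
  rw [expand_monomial]
  congr
  ext k
  simp [Nat.mul_div_cancel' (hQ d hd k)]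

theorem MvPolynomial.IsHomogeneous.of_expand {n m : ℕ} (hn : n ≠ 0) {P : MvPolynomial σ R}
    (h : (expand n P).IsHomogeneous (n * m)) : P.IsHomogeneous m := by
  intro d hd
  rw [← coeff_expand_smul n hn] at hd
  have hweight := h hd
  rw [map_nsmul, smul_eq_mul] at hweight
  exact Nat.eq_of_mul_eq_mul_left (Nat.pos_of_ne_zero hn) hweight

theorem MvPolynomial.IsHomogeneous.expand {m : ℕ} {P : MvPolynomial σ R}
    (h : P.IsHomogeneous m) (n : ℕ) : (expand n P).IsHomogeneous (n * m) :=
  h.aeval _ fun i => isHomogeneous_X_pow i n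

end Expand

noncomputable def omegaProduct : MvPolynomial (Fin 4) ℂ :=
  ∏ i1 : Fin 3, ∏ i2 : Fin 3, ∏ i3 : Fin 3,
    (X 0 + C (ω ^ (i1 : ℕ)) * X 1 + C (ω ^ (i2 : ℕ)) * X 2 + C (ω ^ (i3 : ℕ)) * X 3)

theorem isHomogeneous_omegaProduct : omegaProduct.IsHomogeneous 27 := by
  have hlin (a b c : ℂ) :
      (X 0 + C a * X 1 + C b * X 2 + C c * X 3 : MvPolynomial (Fin 4) ℂ).IsHomogeneous 1 :=
    (((isHomogeneous_X ℂ 0).add (isHomogeneous_C_mul_X a 1)).add (isHomogeneous_C_mul_X b 2)).add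
      (isHomogeneous_C_mul_X c 3)
  rw [omegaProduct, show 27 = ∑ _ : Fin 3, ∑ _ : Fin 3, ∑ _ : Fin 3, 1 by simp]
  exact .prod _ _ _ fun i1 _ => .prod _ _ _ fun i2 _ => .prod _ _ _ fun i3 _ => hlin _ _ _

theorem eval_omegaProduct (x : Fin 4 → ℂ) :
    eval x omegaProduct = ∏ i1 : Fin 3, ∏ i2 : Fin 3, ∏ i3 : Fin 3,
      (x 0 + ω ^ (i1 : ℕ) * x 1 + ω ^ (i2 : ℕ) * x 2 + ω ^ (i3 : ℕ) * x 3) := by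
  simp [omegaProduct]

theorem aeval_update_omegaProduct {j : Fin 4} (hj : j ≠ 0) :
    aeval (Function.update X j (C ω * X j)) omegaProduct = omegaProduct := by
  have hω := isPrimitiveRoot_ω.pow_eq_one
  obtain rfl | rfl | rfl : j = 1 ∨ j = 2 ∨ j = 3 := by omega
  all_goals
    simp only [omegaProduct, map_prod, map_add, map_mul, aeval_X, aeval_C, algebraMap_eq,
      Function.update_apply]
    simp only [Fin.reduceEq, if_true, if_false, ← mul_assoc, ← C_mul, ← pow_succ]
  · exact Fin.prod_pow_add_one_of_pow_eq_one hω fun z => ∏ i2 : Fin 3, ∏ i3 : Fin 3,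
      (X 0 + C z * X 1 + C (ω ^ (i2 : ℕ)) * X 2 + C (ω ^ (i3 : ℕ)) * X 3 : MvPolynomial (Fin 4) ℂ)
  · exact Finset.prod_congr rfl fun i1 _ =>
      Fin.prod_pow_add_one_of_pow_eq_one hω fun z => ∏ i3 : Fin 3,
      (X 0 + C (ω ^ (i1 : ℕ)) * X 1 + C z * X 2 + C (ω ^ (i3 : ℕ)) * X 3 : MvPolynomial (Fin 4) ℂ)
  · exact Finset.prod_congr rfl fun i1 _ => Finset.prod_congr rfl fun i2 _ =>
      Fin.prod_pow_add_one_of_pow_eq_one hω fun z =>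
      (X 0 + C (ω ^ (i1 : ℕ)) * X 1 + C (ω ^ (i2 : ℕ)) * X 2 + C z * X 3 : MvPolynomial (Fin 4) ℂ)

theorem three_dvd_of_mem_support_omegaProduct {d : Fin 4 →₀ ℕ} (hd : d ∈ omegaProduct.support)
    (k : Fin 4) : 3 ∣ d k := by
  have hdvd {k : Fin 4} (hk : k ≠ 0) : 3 ∣ d k :=
    dvd_of_mem_support_of_aeval_update_eq_self isPrimitiveRoot_ω (aeval_update_omegaProduct hk) hd
  by_cases hk : k = 0
  · have hdeg : d 0 + d 1 + d 2 + d 3 = 27 := by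
      simpa [Finsupp.weight_apply, Finsupp.sum_fintype, Fin.sum_univ_four]
        using isHomogeneous_omegaProduct (mem_support_iff.mp hd)
    have h1 := hdvd (k := 1) (by decide)
    have h2 := hdvd (k := 2) (by decide)
    have h3 := hdvd (k := 3) (by decide)
    subst hk
    omega
  · exact hdvd hk

theorem exists_homogeneous_degree36_defining_dual :
    ∃ P : MvPolynomial (Fin 4) ℂ, P.IsHomogeneous 36 ∧
      ∀ β0 β1 β2 β3 : ℂ,
        MvPolynomial.eval (![β0 ^ 3, β1 ^ 3, β2 ^ 3, β3 ^ 3]) P =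
          ∏ i1 : Fin 3, ∏ i2 : Fin 3, ∏ i3 : Fin 3,
            (β0 ^ 4 + ω ^ (i1 : ℕ) * β1 ^ 4 + ω ^ (i2 : ℕ) * β2 ^ 4 + ω ^ (i3 : ℕ) * β3 ^ 4) := by
  obtain ⟨R, hR⟩ := exists_expand_eq_of_dvd fun d hd => three_dvd_of_mem_support_omegaProduct hd
  have hRhom : R.IsHomogeneous 9 :=
    IsHomogeneous.of_expand (n := 3) three_ne_zero (hR ▸ isHomogeneous_omegaProduct)
  refine ⟨expand 4 R, hRhom.expand 4, fun β0 β1 β2 β3 => ?_⟩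
  have hpow : ![β0 ^ 3, β1 ^ 3, β2 ^ 3, β3 ^ 3] ^ 4 = ![β0 ^ 4, β1 ^ 4, β2 ^ 4, β3 ^ 4] ^ 3 := by
    funext k
    fin_cases k <;> simp [← pow_mul]
  rw [eval_expand, hpow, ← eval_expand, hR, eval_omegaProduct]
  simp
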